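/- arXiv:2208.14157 — 2 statements merged into one kernel-verified Lean document; each statement's English description precedes it below -/
import Mathlib

section
/- Suppose for a stationary solution u^e the reconstruction satisfies P_i(x_{i±1/2}) = u^e(x_{i±1/2}) and P_i(x_i^m) = u^e(x_i^m) for all cells when applied to the exact cell averages ū_i^e = Σ_m α_m u^e(x_i^m), and the numerical flux 𝔽 is such that 𝔽(v,v) = f(v). Then the right-hand side L_i = −(F_{i+1/2} − F_{i−1/2})/Δx + (f(u^e(x_{i+1/2})) − f(u^e(x_{i−1/2})))/Δx + Σ_m α_m (S(P_i(x_i^m)) − S(u^e(x_i^m))) H_x(x_i^m) vanishes for every i, so {ū_i^e} is an equilibrium of the semi-discrete scheme. -/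
/-!
At a stationary state the reconstruction reproduces `ue` at both interfaces, so the two
arguments of the numerical flux coincide and consistency turns each `F_{i+1/2}` into the
physical flux `f (ue (x_{i+1/2}))`; the flux difference then cancels the correction term
exactly. The reconstruction also reproduces `ue` at every quadrature node, so each summand of
the source quadrature vanishes.
-/

theorem numericalFlux_eq_flux_of_reconstruction_eq {X α β : Type*} (f : α → β)
    (𝔽 : α → α → β) (h𝔽 : ∀ v, 𝔽 v v = f v) (ue : X → α) (P : ℤ → X → α)
    (xhalf : ℤ → X) (hPl : ∀ i : ℤ, P i (xhalf i) = ue (xhalf i))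
    (hPr : ∀ i : ℤ, P i (xhalf (i + 1)) = ue (xhalf (i + 1))) (i : ℤ) :
    𝔽 (P i (xhalf (i + 1))) (P (i + 1) (xhalf (i + 1))) = f (ue (xhalf (i + 1))) := by
  rw [hPr, hPl, h𝔽]

theorem sum_smul_sub_eq_zero_of_eq_at_nodes {ι X α R E : Type*} [Fintype ι] [Semiring R]
    [AddCommGroup E] [Module R E] (S : α → E) (c : ι → R) (p ue : X → α) (x : ι → X)
    (hp : ∀ m, p (x m) = ue (x m)) :
    ∑ m, c m • (S (p (x m)) - S (ue (x m))) = 0 :=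
  Finset.sum_eq_zero fun m _ => by rw [hp m, sub_self, smul_zero]

theorem semidiscrete_rhs_vanishes_for_stationary_data_general
    (N M : ℕ) (Δx : ℝ)
    -- intercell points and quadrature nodes/weights
    (xhalf : ℤ → ℝ) (xq : ℤ → Fin M → ℝ) (w : Fin M → ℝ)
    -- flux, source, H_x and consistent numerical flux
    (f S : (Fin N → ℝ) → (Fin N → ℝ)) (Hx : ℝ → ℝ)
    (𝔽 : (Fin N → ℝ) → (Fin N → ℝ) → (Fin N → ℝ))
    (h𝔽 : ∀ v, 𝔽 v v = f v)
    -- stationary solution and exactly well-balanced reconstructions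
    (ue : ℝ → (Fin N → ℝ)) (P : ℤ → ℝ → (Fin N → ℝ))
    (hPl : ∀ i : ℤ, P i (xhalf i) = ue (xhalf i))
    (hPr : ∀ i : ℤ, P i (xhalf (i + 1)) = ue (xhalf (i + 1)))
    (hPq : ∀ i : ℤ, ∀ m : Fin M, P i (xq i m) = ue (xq i m))
    -- intercell fluxes and semi-discrete right-hand side
    (F : ℤ → (Fin N → ℝ))
    (hF : ∀ i : ℤ, F i = 𝔽 (P i (xhalf (i + 1))) (P (i + 1) (xhalf (i + 1))))
    (L : ℤ → (Fin N → ℝ))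
    (hL : ∀ i : ℤ, L i =
      -((1 / Δx) • (F i - F (i - 1)))
      + (1 / Δx) • (f (ue (xhalf (i + 1))) - f (ue (xhalf i)))
      + ∑ m, (w m * Hx (xq i m)) • (S (P i (xq i m)) - S (ue (xq i m)))) :
    ∀ i : ℤ, L i = 0 := by
  have hF_flux : ∀ j, F j = f (ue (xhalf (j + 1))) := fun j =>
    (hF j).trans (numericalFlux_eq_flux_of_reconstruction_eq f 𝔽 h𝔽 ue P xhalf hPl hPr j)
  intro i
  rw [hL i, hF_flux i, hF_flux (i - 1), sub_add_cancel,
    sum_smul_sub_eq_zero_of_eq_at_nodes S _ (P i) ue (xq i) (hPq i), add_zero, neg_add_cancel]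

/-- If the reconstruction is exactly well-balanced for a stationary solution `ue`
and the numerical flux is consistent, then the semi-discrete right-hand side
vanishes: the stationary cell averages are an equilibrium of the scheme. -/
theorem semidiscrete_rhs_vanishes_for_stationary_data
    (N M : ℕ) (Δx : ℝ) (hΔx : Δx ≠ 0)
    -- intercell points and quadrature nodes/weights
    (xhalf : ℤ → ℝ) (xq : ℤ → Fin M → ℝ) (w : Fin M → ℝ)
    -- flux, source, H_x and consistent numerical flux
    (f S : (Fin N → ℝ) → (Fin N → ℝ)) (Hx : ℝ → ℝ)
    (𝔽 : (Fin N → ℝ) → (Fin N → ℝ) → (Fin N → ℝ))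
    (h𝔽 : ∀ v, 𝔽 v v = f v)
    -- stationary solution and exactly well-balanced reconstructions
    (ue : ℝ → (Fin N → ℝ)) (P : ℤ → ℝ → (Fin N → ℝ))
    (hPl : ∀ i : ℤ, P i (xhalf i) = ue (xhalf i))
    (hPr : ∀ i : ℤ, P i (xhalf (i + 1)) = ue (xhalf (i + 1)))
    (hPq : ∀ i : ℤ, ∀ m : Fin M, P i (xq i m) = ue (xq i m))
    -- intercell fluxes and semi-discrete right-hand side
    (F : ℤ → (Fin N → ℝ))
    (hF : ∀ i : ℤ, F i = 𝔽 (P i (xhalf (i + 1))) (P (i + 1) (xhalf (i + 1))))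
    (L : ℤ → (Fin N → ℝ))
    (hL : ∀ i : ℤ, L i =
      -((1 / Δx) • (F i - F (i - 1)))
      + (1 / Δx) • (f (ue (xhalf (i + 1))) - f (ue (xhalf i)))
      + ∑ m, (w m * Hx (xq i m)) • (S (P i (xq i m)) - S (ue (xq i m)))) :
    ∀ i : ℤ, L i = 0 :=
  semidiscrete_rhs_vanishes_for_stationary_data_general N M Δx xhalf xq w f S Hx 𝔽 h𝔽 ue P hPl hPr
    hPq F hF L hL
end

section
/- Conversely, if q is a nonzero constant and h : I → (0,∞) is differentiable with q²/(2h(x)²) + g(h(x) − H(x)) constant on an interval I, and gh(x) ≠ u(x)² on I (non-critical flow), then (h, q) is a stationary solution of the frictionless shallow water system: (−u² + gh)h' = ghH' with u = q/h. -/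
/-! Where the Bernoulli invariant `E` is constant, `E' = -(q²/h³) h' + g (h' - H')` vanishes;
multiplied by `h` this is the stationary equation `(-u² + g h) h' = g h H'` with `u = q / h`. -/

open Filter Topology

noncomputable section

def bernoulliEnergy (g q : ℝ) (h H : ℝ → ℝ) (x : ℝ) : ℝ :=
  q ^ 2 / (2 * h x ^ 2) + g * (h x - H x)

theorem hasDerivAt_bernoulliEnergy {g q x h' H' : ℝ} {h H : ℝ → ℝ} (hx : h x ≠ 0)
    (hh : HasDerivAt h h' x) (hH : HasDerivAt H H' x) :
    HasDerivAt (bernoulliEnergy g q h H) (-(q ^ 2 / h x ^ 3) * h' + g * (h' - H')) x := by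
  have hsplit :
      bernoulliEnergy g q h H = fun y => q ^ 2 / 2 * (h y ^ 2)⁻¹ + g * (h y - H y) := by
    funext y
    simp only [bernoulliEnergy]
    ring
  rw [hsplit]
  refine (((hh.fun_pow 2).fun_inv (pow_ne_zero 2 hx)).const_mul (q ^ 2 / 2)).fun_add
    ((hh.fun_sub hH).const_mul g) |>.congr_deriv ?_
  field_simp
  ring

theorem stationary_of_bernoulliEnergy_deriv_eq_zero {g q h₀ h' H' : ℝ} (hh₀ : h₀ ≠ 0)
    (hE' : -(q ^ 2 / h₀ ^ 3) * h' + g * (h' - H') = 0) :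
    (-(q / h₀) ^ 2 + g * h₀) * h' = g * h₀ * H' := by
  field_simp at hE' ⊢
  linear_combination hE'

end

theorem shallow_water_constant_energy_implies_stationary_general
    (g q Econst a b : ℝ) (h H : ℝ → ℝ)
    (hh : Differentiable ℝ h) (hH : Differentiable ℝ H)
    (hpos : ∀ x ∈ Set.Ioo a b, 0 < h x)
    (hE : ∀ x ∈ Set.Ioo a b,
      q ^ 2 / (2 * (h x) ^ 2) + g * (h x - H x) = Econst) :
    ∀ x ∈ Set.Ioo a b,
      (-(q / h x) ^ 2 + g * h x) * deriv h x = g * h x * deriv H x := by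
  intro x hx
  have hconst : bernoulliEnergy g q h H =ᶠ[𝓝 x] fun _ => Econst :=
    eventually_of_mem (isOpen_Ioo.mem_nhds hx) hE
  have hderiv :=
    hasDerivAt_bernoulliEnergy (g := g) (q := q) (hpos x hx).ne' (hh x).hasDerivAt (hH x).hasDerivAt
  refine stationary_of_bernoulliEnergy_deriv_eq_zero (hpos x hx).ne' ?_
  rw [← hderiv.deriv, hconst.deriv_eq, deriv_const]

/-- Converse: if the Bernoulli invariant `E = q²/(2h²) + g(h − H)` is constant
on an open interval, with nonzero constant discharge `q`, positive depth and
non-critical flow, then `(−u² + gh) h' = g h H'` there. -/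
theorem shallow_water_constant_energy_implies_stationary
    (g q Econst a b : ℝ) (hq : q ≠ 0) (h H : ℝ → ℝ)
    (hh : Differentiable ℝ h) (hH : Differentiable ℝ H)
    (hpos : ∀ x ∈ Set.Ioo a b, 0 < h x)
    (hnoncrit : ∀ x ∈ Set.Ioo a b, g * h x ≠ (q / h x) ^ 2)
    (hE : ∀ x ∈ Set.Ioo a b,
      q ^ 2 / (2 * (h x) ^ 2) + g * (h x - H x) = Econst) :
    ∀ x ∈ Set.Ioo a b,
      (-(q / h x) ^ 2 + g * h x) * deriv h x = g * h x * deriv H x :=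
  shallow_water_constant_energy_implies_stationary_general g q Econst a b h H hh hH hpos hE
end
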